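/- Let A be a D-simple D-superalgebra with k = A^D, and let V be an A-module in the category of D-supermodules. Then the natural map μ : A ⊗_k V^D → V, a ⊗ v ↦ av, is injective. Equivalently, elements of V^D which are linearly independent over k remain linearly independent over A. -/

import Mathlib

open scoped TensorProduct

universe u

/-- A ℤ/2-grading making the `R`-algebra `A` into a superalgebra
(not necessarily supercommutative). -/
structure SuperRing (R : Type u) [Field R] (A : Type u) [Ring A] [Algebra R A] where
  grade : ZMod 2 → Submodule R A
  internal : DirectSum.IsInternal grade
  one_mem : (1 : A) ∈ grade 0
  mul_mem : ∀ {i j : ZMod 2} {a b : A}, a ∈ grade i → b ∈ grade j → a * b ∈ grade (i + j)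

/-- Super-commutativity of a superalgebra. -/
def SuperRing.SuperComm {R : Type u} [Field R] {A : Type u} [Ring A] [Algebra R A]
    (g : SuperRing R A) : Prop :=
  ∀ {i j : ZMod 2} {a b : A}, a ∈ g.grade i → b ∈ g.grade j →
    a * b = ((-1 : R) ^ (i.val * j.val)) • (b * a)

/-- A super-cocommutative Hopf superalgebra structure on the `R`-algebra `D`.
Sign-sensitive axioms (super-cocommutativity, multiplicativity of the coproduct) are
expressed using arbitrary homogeneous finite representations of coproducts. -/
structure SuperHopf (R : Type u) [Field R] (D : Type u) [Ring D] [Algebra R D]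
    extends SuperRing R D where
  comul : D →ₗ[R] D ⊗[R] D
  counit : D →ₗ[R] R
  coassoc : (TensorProduct.assoc R D D D).toLinearMap ∘ₗ
      (TensorProduct.map comul LinearMap.id) ∘ₗ comul
    = (TensorProduct.map LinearMap.id comul) ∘ₗ comul
  counit_comul_left : ∀ d : D,
    (TensorProduct.lid R D) ((TensorProduct.map counit LinearMap.id) (comul d)) = d
  counit_comul_right : ∀ d : D,
    (TensorProduct.rid R D) ((TensorProduct.map LinearMap.id counit) (comul d)) = d
  comul_one : comul 1 = 1 ⊗ₜ[R] 1
  counit_one : counit 1 = 1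
  comul_mul : ∀ (d d' : D) (ι κ : Type u) (s : Finset ι) (t : Finset κ)
    (x y : ι → D) (py : ι → ZMod 2) (w v : κ → D) (pw : κ → ZMod 2),
    (∀ i ∈ s, y i ∈ grade (py i)) → (∀ j ∈ t, w j ∈ grade (pw j)) →
    (∑ i ∈ s, x i ⊗ₜ[R] y i) = comul d → (∑ j ∈ t, w j ⊗ₜ[R] v j) = comul d' →
    comul (d * d') = ∑ i ∈ s, ∑ j ∈ t,
      ((-1 : R) ^ ((py i).val * (pw j).val)) • ((x i * w j) ⊗ₜ[R] (y i * v j))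
  counit_mul : ∀ d d' : D, counit (d * d') = counit d * counit d'
  comul_grade : ∀ (p : ZMod 2), ∀ d ∈ grade p, comul d ∈
    ⨆ q : ZMod 2, LinearMap.range
      (TensorProduct.map (grade q).subtype (grade (p - q)).subtype)
  counit_odd : ∀ d ∈ grade 1, counit d = 0
  cocomm : ∀ (d : D) (ι : Type u) (s : Finset ι) (x y : ι → D) (px py : ι → ZMod 2),
    (∀ i ∈ s, x i ∈ grade (px i)) → (∀ i ∈ s, y i ∈ grade (py i)) →
    (∑ i ∈ s, x i ⊗ₜ[R] y i) = comul d →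
    (∑ i ∈ s, ((-1 : R) ^ ((px i).val * (py i).val)) • (y i ⊗ₜ[R] x i)) = comul d
  antipode : D →ₗ[R] D
  antipode_left : ∀ d : D,
    (LinearMap.mul' R D) ((TensorProduct.map antipode LinearMap.id) (comul d))
      = counit d • 1
  antipode_right : ∀ d : D,
    (LinearMap.mul' R D) ((TensorProduct.map LinearMap.id antipode) (comul d))
      = counit d • 1

/-- A (left) action of the Hopf superalgebra `D` on the superalgebra `A`, making `A`
a `D`-superalgebra, i.e. an algebra in the symmetric monoidal category of
`D`-supermodules; the Koszul sign in the multiplicativity axiom is expressed via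
homogeneous representations of the coproduct. -/
structure SuperAction (R : Type u) [Field R] (D A : Type u) [Ring D] [Algebra R D]
    [Ring A] [Algebra R A] (H : SuperHopf R D) (g : SuperRing R A) where
  act : D →ₗ[R] A →ₗ[R] A
  act_one : act 1 = LinearMap.id
  act_mul : ∀ d d' : D, act (d * d') = act d ∘ₗ act d'
  act_grade : ∀ {p q : ZMod 2} {d : D} {a : A}, d ∈ H.grade p → a ∈ g.grade q →
    act d a ∈ g.grade (p + q)
  act_algebra_one : ∀ d : D, act d (1 : A) = H.counit d • (1 : A)
  act_algebra_mul : ∀ (d : D) (a b : A) (p : ZMod 2), a ∈ g.grade p →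
    ∀ (ι : Type u) (s : Finset ι) (x y : ι → D) (py : ι → ZMod 2),
    (∀ i ∈ s, y i ∈ H.grade (py i)) →
    (∑ i ∈ s, x i ⊗ₜ[R] y i) = H.comul d →
    act d (a * b) = ∑ i ∈ s,
      ((-1 : R) ^ (p.val * (py i).val)) • (act (x i) a * act (y i) b)

/-- The `D`-invariants `A^D` of a `D`-superalgebra. -/
def SuperAction.invariants {R : Type u} [Field R] {D A : Type u} [Ring D] [Algebra R D]
    [Ring A] [Algebra R A] {H : SuperHopf R D} {g : SuperRing R A}
    (S : SuperAction R D A H g) : Submodule R A where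
  carrier := {a : A | ∀ d : D, S.act d a = H.counit d • a}
  add_mem' := by
    intro a b ha hb
    intro d
    simp only [map_add, ha d, hb d, smul_add]
  zero_mem' := by intro d; simp
  smul_mem' := by
    intro r a ha
    intro d
    simp only [map_smul, ha d]
    rw [smul_comm]

/-- A homogeneous two-sided ideal (super-ideal). -/
def SuperRing.IsSuperIdeal {R : Type u} [Field R] {A : Type u} [Ring A] [Algebra R A]
    (g : SuperRing R A) (I : Submodule R A) : Prop :=
  (∀ a : A, ∀ x ∈ I, a * x ∈ I) ∧ (∀ a : A, ∀ x ∈ I, x * a ∈ I) ∧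
    I = (I ⊓ g.grade 0) ⊔ (I ⊓ g.grade 1)

/-- `D`-simplicity: `A ≠ 0` and `A` has no nontrivial `D`-stable super-ideal. -/
def SuperAction.IsSimple {R : Type u} [Field R] {D A : Type u} [Ring D] [Algebra R D]
    [Ring A] [Algebra R A] {H : SuperHopf R D} {g : SuperRing R A}
    (S : SuperAction R D A H g) : Prop :=
  (1 : A) ≠ 0 ∧ ∀ I : Submodule R A, g.IsSuperIdeal I →
    (∀ d : D, ∀ x ∈ I, S.act d x ∈ I) → I = ⊥ ∨ I = ⊤

/-- An `A`-module in the category of `D`-supermodules. -/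
structure SuperModule (R : Type u) [Field R] (D A V : Type u) [Ring D] [Algebra R D]
    [Ring A] [Algebra R A] [AddCommGroup V] [Module R V]
    (H : SuperHopf R D) (g : SuperRing R A) (S : SuperAction R D A H g) where
  gradeV : ZMod 2 → Submodule R V
  internalV : DirectSum.IsInternal gradeV
  smulA : A →ₗ[R] V →ₗ[R] V
  smulA_one : smulA 1 = LinearMap.id
  smulA_mul : ∀ a b : A, smulA (a * b) = smulA a ∘ₗ smulA b
  smulA_grade : ∀ {i j : ZMod 2} {a : A} {v : V}, a ∈ g.grade i → v ∈ gradeV j →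
    smulA a v ∈ gradeV (i + j)
  actV : D →ₗ[R] V →ₗ[R] V
  actV_one : actV 1 = LinearMap.id
  actV_mul : ∀ d d' : D, actV (d * d') = actV d ∘ₗ actV d'
  actV_grade : ∀ {p q : ZMod 2} {d : D} {v : V}, d ∈ H.grade p → v ∈ gradeV q →
    actV d v ∈ gradeV (p + q)
  actV_smulA : ∀ (d : D) (a : A) (v : V) (p : ZMod 2), a ∈ g.grade p →
    ∀ (ι : Type u) (s : Finset ι) (x y : ι → D) (py : ι → ZMod 2),
    (∀ i ∈ s, y i ∈ H.grade (py i)) →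
    (∑ i ∈ s, x i ⊗ₜ[R] y i) = H.comul d →
    actV d (smulA a v) = ∑ i ∈ s,
      ((-1 : R) ^ (p.val * (py i).val)) • smulA (S.act (x i) a) (actV (y i) v)

/-- The `D`-invariants `V^D` of a `D`-supermodule. -/
def SuperModule.invariantsV {R : Type u} [Field R] {D A V : Type u} [Ring D] [Algebra R D]
    [Ring A] [Algebra R A] [AddCommGroup V] [Module R V]
    {H : SuperHopf R D} {g : SuperRing R A} {S : SuperAction R D A H g}
    (M : SuperModule R D A V H g S) : Submodule R V where
  carrier := {v : V | ∀ d : D, M.actV d v = H.counit d • v}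
  add_mem' := by
    intro a b ha hb d
    simp only [map_add, ha d, hb d, smul_add]
  zero_mem' := by intro d; simp
  smul_mem' := by
    intro r v hv d
    simp only [map_smul, hv d]
    rw [smul_comm]

/-!
Take a nonzero `A`-linear relation `∑ cᵢ vᵢ = 0` whose support `T` is minimal, and fix `j ∈ T`.
Since the `vᵢ` are `D`-invariant, the `j`-th coefficients of the relations supported in `T`
form a `D`-stable left ideal `J ≠ 0`. It need not be homogeneous, but `J + σJ` and `J ∩ σJ`
are, where `σ` is the parity operator; by supercommutativity they are then `D`-stable
super-ideals, so `D`-simplicity forces `J + σJ = A` and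
`J ∩ σJ ∈ {0, A}`; in both cases `J` contains a nonzero invariant `z = c'ⱼ`. For every `d ∈ D`,
`d • c' - ε(d) c'` is a relation supported in `T \ {j}`, hence zero by minimality, so `c'`
is a nonzero relation with coefficients in `A^D`: a contradiction.
-/

namespace DirectSum.IsInternal

section Component

variable {ι R W : Type*} [DecidableEq ι] [Semiring R] [AddCommMonoid W] [Module R W]
  {G : ι → Submodule R W} (hG : IsInternal G)

noncomputable def component (i : ι) : W →ₗ[R] W :=
  (G i).subtype ∘ₗ DirectSum.component R ι (fun i ↦ G i) i ∘ₗ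
    (LinearEquiv.ofBijective (coeLinearMap G) hG).symm.toLinearMap

theorem component_apply (i : ι) (x : W) :
    hG.component i x = (LinearEquiv.ofBijective (coeLinearMap G) hG).symm x i := rfl

theorem component_mem (i : ι) (x : W) : hG.component i x ∈ G i :=
  Submodule.coe_mem _

theorem component_of_mem_same {i : ι} {x : W} (hx : x ∈ G i) : hG.component i x = x := by
  rw [component_apply, hG.ofBijective_coeLinearMap_of_mem hx]

theorem component_of_mem_ne {i j : ι} (hij : i ≠ j) {x : W} (hx : x ∈ G i) :
    hG.component j x = 0 := by
  rw [component_apply, hG.ofBijective_coeLinearMap_of_mem_ne hij hx, Submodule.coe_zero]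

theorem sum_component [Fintype ι] (x : W) : ∑ i, hG.component i x = x := by
  set e := LinearEquiv.ofBijective (coeLinearMap G) hG
  conv_rhs => rw [← e.apply_symm_apply x, ← DirectSum.sum_univ_of (e.symm x)]
  simp only [map_sum, component_apply]
  exact Finset.sum_congr rfl fun i _ ↦ (coeLinearMap_of G i _).symm

end Component

theorem exists_sum_tmul_mem {ι R M N : Type*} [DecidableEq ι] [Fintype ι] [CommSemiring R]
    [AddCommMonoid M] [Module R M] [AddCommMonoid N] [Module R N] {G : ι → Submodule R N}
    (hG : IsInternal G) (t : M ⊗[R] N) :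
    ∃ (s : Finset ((M × N) × ι)) (x : (M × N) × ι → M) (y : (M × N) × ι → N),
      (∀ j ∈ s, y j ∈ G j.2) ∧ ∑ j ∈ s, x j ⊗ₜ[R] y j = t := by
  obtain ⟨S, rfl⟩ := TensorProduct.exists_finset t
  refine ⟨S ×ˢ Finset.univ, fun j ↦ j.1.1, fun j ↦ hG.component j.2 j.1.2,
    fun j _ ↦ hG.component_mem _ _, ?_⟩
  simp only [Finset.sum_product, ← TensorProduct.tmul_sum, hG.sum_component]

@[elab_as_elim]
theorem induction_on_homogeneous {ι R W : Type*} [DecidableEq ι] [Fintype ι] [Semiring R]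
    [AddCommMonoid W] [Module R W] {G : ι → Submodule R W} (hG : IsInternal G)
    {motive : W → Prop} (x : W) (mem : ∀ i, ∀ y ∈ G i, motive y) (zero : motive 0)
    (add : ∀ y z, motive y → motive z → motive (y + z)) : motive x := by
  rw [← hG.sum_component x]
  exact Finset.sum_induction _ motive add zero fun i _ ↦ mem i _ (hG.component_mem i x)

section Parity

variable {R W : Type*} [CommRing R] [AddCommGroup W] [Module R W]
  {G : ZMod 2 → Submodule R W} (hG : IsInternal G)

noncomputable def parity : W →ₗ[R] W := ∑ p, ((-1 : R) ^ p.val) • hG.component p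

theorem parity_of_mem {p : ZMod 2} {x : W} (hx : x ∈ G p) :
    hG.parity x = (-1 : R) ^ p.val • x := by
  simp only [parity, LinearMap.sum_apply, LinearMap.smul_apply]
  rw [Finset.sum_eq_single p (fun q _ hq ↦ by rw [hG.component_of_mem_ne hq.symm hx, smul_zero])
    (by simp), hG.component_of_mem_same hx]

theorem parity_parity (x : W) : hG.parity (hG.parity x) = x := by
  induction x using hG.induction_on_homogeneous with
  | mem p y hy =>
    rw [hG.parity_of_mem hy, map_smul, hG.parity_of_mem hy, smul_smul, ← pow_add, ← two_mul,
      pow_mul, neg_one_sq, one_pow, one_smul]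
  | zero => simp
  | add y z hy hz => simp [hy, hz]

theorem component_zero_add_component_one (x : W) : hG.component 0 x + hG.component 1 x = x :=
  (Fin.sum_univ_two _).symm.trans (hG.sum_component x)

theorem parity_eq_component_sub (x : W) :
    hG.parity x = hG.component 0 x - hG.component 1 x := by
  conv_lhs => rw [← hG.component_zero_add_component_one x]
  rw [map_add, hG.parity_of_mem (hG.component_mem 0 x), hG.parity_of_mem (hG.component_mem 1 x)]
  simp [ZMod.val_one, sub_eq_add_neg]

theorem parity_injective : Function.Injective hG.parity :=
  Function.LeftInverse.injective hG.parity_parity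

end Parity

theorem component_mem_of_parity_mem {R W : Type*} [Field R] [NeZero (2 : R)] [AddCommGroup W]
    [Module R W] {G : ZMod 2 → Submodule R W} (hG : IsInternal G) {L : Submodule R W}
    (hL : ∀ z ∈ L, hG.parity z ∈ L) {z : W} (hz : z ∈ L) (p : ZMod 2) :
    hG.component p z ∈ L := by
  set z₀ := hG.component 0 z
  set z₁ := hG.component 1 z
  have hsum : z₀ + z₁ = z := hG.component_zero_add_component_one z
  have hσ : hG.parity z = z₀ - z₁ := hG.parity_eq_component_sub z
  have h₀ : z₀ = (2 : R)⁻¹ • (z + hG.parity z) := by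
    rw [hσ, ← hsum, eq_inv_smul_iff₀ two_ne_zero, two_smul]
    abel
  have h₀L : z₀ ∈ L := h₀ ▸ L.smul_mem _ (L.add_mem hz (hL z hz))
  obtain rfl | rfl := (by decide : ∀ p : ZMod 2, p = 0 ∨ p = 1) p
  · exact h₀L
  · show z₁ ∈ L
    exact eq_sub_of_add_eq' hsum ▸ L.sub_mem hz h₀L

end DirectSum.IsInternal

theorem ZMod.neg_one_pow_val_add {R : Type*} [Ring R] (p q : ZMod 2) :
    (-1 : R) ^ (p + q).val = (-1) ^ p.val * (-1) ^ q.val := by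
  rw [ZMod.val_add, ← neg_one_pow_eq_pow_mod_two, pow_add]

namespace SuperRing

variable {R A : Type u} [Field R] [Ring A] [Algebra R A] (g : SuperRing R A)

noncomputable def parity : A →ₗ[R] A := g.internal.parity

theorem parity_of_mem {p : ZMod 2} {a : A} (ha : a ∈ g.grade p) :
    g.parity a = (-1 : R) ^ p.val • a :=
  g.internal.parity_of_mem ha

theorem parity_parity (a : A) : g.parity (g.parity a) = a := g.internal.parity_parity a

theorem parity_mul (a b : A) : g.parity (a * b) = g.parity a * g.parity b := by
  induction a using g.internal.induction_on_homogeneous with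
  | mem p a ha =>
    induction b using g.internal.induction_on_homogeneous with
    | mem q b hb =>
      rw [g.parity_of_mem (g.mul_mem ha hb), g.parity_of_mem ha, g.parity_of_mem hb,
        smul_mul_smul_comm, ZMod.neg_one_pow_val_add]
    | zero => simp
    | add b b' hb hb' => simp only [mul_add, map_add, hb, hb']
  | zero => simp
  | add a a' ha ha' => simp only [add_mul, map_add, ha, ha']

theorem isSuperIdeal_of_parity_mem [NeZero (2 : R)] (hg : g.SuperComm) {L : Submodule R A}
    (hmul : ∀ a : A, ∀ z ∈ L, a * z ∈ L) (hpar : ∀ z ∈ L, g.parity z ∈ L) :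
    g.IsSuperIdeal L := by
  have hcomp (p : ZMod 2) {z : A} (hz : z ∈ L) : g.internal.component p z ∈ L :=
    g.internal.component_mem_of_parity_mem hpar hz p
  have hhom_mul : ∀ p, ∀ y ∈ L, y ∈ g.grade p → ∀ a : A, y * a ∈ L := by
    intro p y hyL hy a
    induction a using g.internal.induction_on_homogeneous with
    | mem q a ha => exact hg hy ha ▸ L.smul_mem _ (hmul a y hyL)
    | zero => simp
    | add a a' ha ha' => exact mul_add y a a' ▸ L.add_mem ha ha'
  refine ⟨hmul, fun a z hz ↦ ?_, le_antisymm (fun z hz ↦ ?_) (sup_le inf_le_left inf_le_left)⟩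
  · rw [← g.internal.component_zero_add_component_one z, add_mul]
    exact L.add_mem (hhom_mul 0 _ (hcomp 0 hz) (g.internal.component_mem 0 z) a)
      (hhom_mul 1 _ (hcomp 1 hz) (g.internal.component_mem 1 z) a)
  · rw [← g.internal.component_zero_add_component_one z]
    exact Submodule.add_mem_sup ⟨hcomp 0 hz, g.internal.component_mem 0 z⟩
      ⟨hcomp 1 hz, g.internal.component_mem 1 z⟩

end SuperRing

namespace SuperHopf

variable {R D : Type u} [Field R] [Ring D] [Algebra R D] (H : SuperHopf R D)

theorem neg_one_pow_mul_counit_of_mem {q : ZMod 2} {d : D} (hd : d ∈ H.grade q) (n : ℕ) :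
    (-1 : R) ^ (n * q.val) * H.counit d = H.counit d := by
  obtain rfl | rfl := (by decide : ∀ q : ZMod 2, q = 0 ∨ q = 1) q
  · simp
  · simp [H.counit_odd d hd]

theorem counit_parity (d : D) : H.counit (H.parity d) = H.counit d := by
  induction d using H.internal.induction_on_homogeneous with
  | mem p d hd =>
    rw [H.parity_of_mem hd, map_smul, smul_eq_mul, ← one_mul p.val,
      H.neg_one_pow_mul_counit_of_mem hd]
  | zero => simp
  | add d d' hd hd' => simp only [map_add, hd, hd']

end SuperHopf

namespace SuperAction

variable {R D A : Type u} [Field R] [Ring D] [Algebra R D] [Ring A] [Algebra R A]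
  {H : SuperHopf R D} {g : SuperRing R A} (S : SuperAction R D A H g)

theorem act_parity_parity (d : D) (a : A) :
    S.act (H.parity d) (g.parity a) = g.parity (S.act d a) := by
  induction d using H.internal.induction_on_homogeneous with
  | mem p d hd =>
    induction a using g.internal.induction_on_homogeneous with
    | mem q a ha =>
      rw [H.parity_of_mem hd, g.parity_of_mem ha, g.parity_of_mem (S.act_grade hd ha),
        ZMod.neg_one_pow_val_add]
      simp only [map_smul, LinearMap.smul_apply, smul_smul, mul_comm]
    | zero => simp
    | add a a' ha ha' => simp only [map_add, ha, ha']
  | zero => simp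
  | add d d' hd hd' => simp only [map_add, LinearMap.add_apply, hd, hd']

theorem act_parity (d : D) (a : A) : S.act d (g.parity a) = g.parity (S.act (H.parity d) a) := by
  rw [← S.act_parity_parity, H.parity_parity]

theorem one_mem_invariants : (1 : A) ∈ S.invariants := S.act_algebra_one

structure IsStableLeftIdeal (L : Submodule R A) : Prop where
  mul_mem : ∀ a : A, ∀ z ∈ L, a * z ∈ L
  act_mem : ∀ d : D, ∀ z ∈ L, S.act d z ∈ L

namespace IsStableLeftIdeal

variable {S} {L L' : Submodule R A}

theorem sup (hL : S.IsStableLeftIdeal L) (hL' : S.IsStableLeftIdeal L') :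
    S.IsStableLeftIdeal (L ⊔ L') where
  mul_mem a z hz := by
    obtain ⟨x, hx, y, hy, rfl⟩ := Submodule.mem_sup.1 hz
    exact mul_add a x y ▸ Submodule.add_mem_sup (hL.mul_mem a x hx) (hL'.mul_mem a y hy)
  act_mem d z hz := by
    obtain ⟨x, hx, y, hy, rfl⟩ := Submodule.mem_sup.1 hz
    exact (map_add (S.act d) x y).symm ▸
      Submodule.add_mem_sup (hL.act_mem d x hx) (hL'.act_mem d y hy)

theorem inf (hL : S.IsStableLeftIdeal L) (hL' : S.IsStableLeftIdeal L') :
    S.IsStableLeftIdeal (L ⊓ L') where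
  mul_mem a z hz := ⟨hL.mul_mem a z hz.1, hL'.mul_mem a z hz.2⟩
  act_mem d z hz := ⟨hL.act_mem d z hz.1, hL'.act_mem d z hz.2⟩

theorem map_parity (hL : S.IsStableLeftIdeal L) : S.IsStableLeftIdeal (L.map g.parity) where
  mul_mem a := by
    rintro _ ⟨w, hw, rfl⟩
    rw [← g.parity_parity a, ← g.parity_mul]
    exact Submodule.mem_map_of_mem (hL.mul_mem _ w hw)
  act_mem d := by
    rintro _ ⟨w, hw, rfl⟩
    rw [S.act_parity]
    exact Submodule.mem_map_of_mem (hL.act_mem _ w hw)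

theorem eq_bot_or_eq_top [NeZero (2 : R)] (hg : g.SuperComm) (hs : S.IsSimple)
    (hL : S.IsStableLeftIdeal L) (hpar : ∀ z ∈ L, g.parity z ∈ L) : L = ⊥ ∨ L = ⊤ :=
  hs.2 L (g.isSuperIdeal_of_parity_mem hg hL.mul_mem hpar) hL.act_mem

theorem mem_invariants_of_add_parity_eq_one (hL : S.IsStableLeftIdeal L)
    (hdisj : L ⊓ L.map g.parity = ⊥) {z z' : A} (hz : z ∈ L) (hz' : z' ∈ L)
    (h1 : z + g.parity z' = 1) : z ∈ S.invariants ∧ z' ∈ S.invariants := by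
  -- `d - ε(d)` kills `1 = z + σ z'`, and the two resulting summands lie in `L` and `σ L`
  have hdefect : ∀ d : D, S.act d z - H.counit d • z = 0 ∧
      S.act (H.parity d) z' - H.counit d • z' = 0 := by
    intro d
    have hx : S.act d z - H.counit d • z ∈ L := L.sub_mem (hL.act_mem d z hz) (L.smul_mem _ hz)
    have hy : S.act (H.parity d) z' - H.counit d • z' ∈ L :=
      L.sub_mem (hL.act_mem _ z' hz') (L.smul_mem _ hz')
    have hxy : S.act d z - H.counit d • z + g.parity (S.act (H.parity d) z' - H.counit d • z')
        = 0 := by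
      have := S.act_algebra_one d
      rw [← h1, map_add, S.act_parity] at this
      rw [map_sub, map_smul, sub_add_sub_comm, this, smul_add, sub_self]
    have hx' : S.act d z - H.counit d • z ∈ L.map g.parity := by
      rw [eq_neg_of_add_eq_zero_left hxy, ← map_neg]
      exact Submodule.mem_map_of_mem (L.neg_mem hy)
    have hx0 : S.act d z - H.counit d • z = 0 := (Submodule.mem_bot R).1 (hdisj ▸ ⟨hx, hx'⟩)
    refine ⟨hx0, g.internal.parity_injective ?_⟩
    rw [hx0, zero_add] at hxy
    rw [map_zero]
    exact hxy
  refine ⟨fun d ↦ sub_eq_zero.1 (hdefect d).1, fun d ↦ ?_⟩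
  simpa [H.parity_parity, H.counit_parity, sub_eq_zero] using (hdefect (H.parity d)).2

theorem exists_ne_zero_mem_invariants [NeZero (2 : R)] (hg : g.SuperComm) (hs : S.IsSimple)
    (hL : S.IsStableLeftIdeal L) (hL0 : L ≠ ⊥) : ∃ z ∈ L, z ≠ 0 ∧ z ∈ S.invariants := by
  have hσL : ∀ z ∈ L.map g.parity, g.parity z ∈ L := by
    rintro _ ⟨w, hw, rfl⟩
    rwa [g.parity_parity]
  have hσL' : ∀ z ∈ L, g.parity z ∈ L.map g.parity := fun z hz ↦ Submodule.mem_map_of_mem hz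
  have hsup : L ⊔ L.map g.parity = ⊤ := by
    refine ((hL.sup hL.map_parity).eq_bot_or_eq_top hg hs fun z hz ↦ ?_).resolve_left
      fun h ↦ hL0 (eq_bot_iff.2 (h ▸ le_sup_left))
    obtain ⟨x, hx, y, hy, rfl⟩ := Submodule.mem_sup.1 hz
    rw [map_add, add_comm]
    exact Submodule.add_mem_sup (hσL y hy) (hσL' x hx)
  rcases (hL.inf hL.map_parity).eq_bot_or_eq_top hg hs
    (fun z hz ↦ ⟨hσL z hz.2, hσL' z hz.1⟩) with hinf | hinf
  · obtain ⟨z, hz, _, ⟨z', hz', rfl⟩, h1⟩ :=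
      Submodule.mem_sup.1 (hsup ▸ Submodule.mem_top : (1 : A) ∈ L ⊔ L.map g.parity)
    obtain ⟨hz_inv, hz'_inv⟩ := hL.mem_invariants_of_add_parity_eq_one hinf hz hz' h1
    by_cases hz0 : z = 0
    · refine ⟨z', hz', fun hz'0 ↦ hs.1 ?_, hz'_inv⟩
      rw [← h1, hz0, hz'0, map_zero, add_zero]
    · exact ⟨z, hz, hz0, hz_inv⟩
  · exact ⟨1, (hinf ▸ Submodule.mem_top : (1 : A) ∈ L ⊓ L.map g.parity).1, hs.1,
      S.one_mem_invariants⟩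

end IsStableLeftIdeal

theorem isStableLeftIdeal_map_proj {ι : Type*} {K : Submodule R (ι → A)}
    (hmul : ∀ a : A, ∀ c ∈ K, (fun i ↦ a * c i) ∈ K)
    (hact : ∀ d : D, ∀ c ∈ K, (fun i ↦ S.act d (c i)) ∈ K) (j : ι) :
    S.IsStableLeftIdeal (K.map (LinearMap.proj j)) where
  mul_mem a := by
    rintro _ ⟨c, hc, rfl⟩
    exact ⟨_, hmul a c hc, rfl⟩
  act_mem d := by
    rintro _ ⟨c, hc, rfl⟩
    exact ⟨_, hact d c hc, rfl⟩

end SuperAction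

theorem SuperModule.actV_smulA_of_mem_invariantsV {R D A V : Type u} [Field R] [Ring D]
    [Algebra R D] [Ring A] [Algebra R A] [AddCommGroup V] [Module R V] {H : SuperHopf R D}
    {g : SuperRing R A} {S : SuperAction R D A H g} (M : SuperModule R D A V H g S)
    {v : V} (hv : v ∈ M.invariantsV) (d : D) (a : A) :
    M.actV d (M.smulA a v) = M.smulA (S.act d a) v := by
  obtain ⟨s, x, y, hy, hxy⟩ := H.internal.exists_sum_tmul_mem (H.comul d)
  have hd : ∑ j ∈ s, H.counit (y j) • x j = d := by
    simpa [← hxy] using H.counit_comul_right d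
  induction a using g.internal.induction_on_homogeneous with
  | mem p a ha =>
    rw [M.actV_smulA d a v p ha _ s x y Prod.snd hy hxy, ← hd]
    simp only [map_sum, map_smul, LinearMap.sum_apply, LinearMap.smul_apply]
    refine Finset.sum_congr rfl fun j hj ↦ ?_
    rw [hv (y j), map_smul, smul_smul, H.neg_one_pow_mul_counit_of_mem (hy j hj)]
  | zero => simp
  | add a a' ha ha' => simp only [map_add, LinearMap.add_apply, ha, ha']

namespace SuperModule

variable {R D A V : Type u} [Field R] [Ring D] [Algebra R D] [Ring A] [Algebra R A]
  [AddCommGroup V] [Module R V] {H : SuperHopf R D} {g : SuperRing R A}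
  {S : SuperAction R D A H g} (M : SuperModule R D A V H g S) {ι : Type*} [Fintype ι]

def relations (v : ι → V) : Submodule R (ι → A) :=
  LinearMap.ker (∑ i, M.smulA.flip (v i) ∘ₗ LinearMap.proj i)

theorem mem_relations {v : ι → V} {c : ι → A} :
    c ∈ M.relations v ↔ ∑ i, M.smulA (c i) (v i) = 0 := by
  simp [relations, LinearMap.sum_apply]

theorem mul_mem_relations {v : ι → V} {c : ι → A} (hc : c ∈ M.relations v) (a : A) :
    (fun i ↦ a * c i) ∈ M.relations v := by
  rw [mem_relations] at *
  simp only [M.smulA_mul, LinearMap.comp_apply, ← map_sum, hc, map_zero]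

theorem act_mem_relations {v : ι → V} (hv : ∀ i, v i ∈ M.invariantsV) {c : ι → A}
    (hc : c ∈ M.relations v) (d : D) : (fun i ↦ S.act d (c i)) ∈ M.relations v := by
  rw [mem_relations] at *
  simp only [← M.actV_smulA_of_mem_invariantsV (hv _), ← map_sum, hc, map_zero]

def relationsOn (v : ι → V) (T : Finset ι) : Submodule R (ι → A) :=
  M.relations v ⊓ Submodule.pi (↑T)ᶜ fun _ ↦ ⊥

theorem mem_relationsOn {v : ι → V} {T : Finset ι} {c : ι → A} :
    c ∈ M.relationsOn v T ↔ c ∈ M.relations v ∧ ∀ i ∉ T, c i = 0 := by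
  simp [relationsOn, Submodule.mem_pi]

theorem isStableLeftIdeal_map_proj_relationsOn {v : ι → V} (hv : ∀ i, v i ∈ M.invariantsV)
    (T : Finset ι) (j : ι) : S.IsStableLeftIdeal ((M.relationsOn v T).map (LinearMap.proj j)) := by
  refine S.isStableLeftIdeal_map_proj (fun a c hc ↦ ?_) (fun d c hc ↦ ?_) j <;>
    rw [mem_relationsOn] at hc ⊢
  · exact ⟨M.mul_mem_relations hc.1 a, fun i hi ↦ by simp [hc.2 i hi]⟩
  · exact ⟨M.act_mem_relations hv hc.1 d, fun i hi ↦ by simp [hc.2 i hi]⟩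

theorem mem_invariants_of_mem_relationsOn [DecidableEq ι] {v : ι → V}
    (hv : ∀ i, v i ∈ M.invariantsV) {T : Finset ι} {j : ι}
    (hmin : ∀ c ∈ M.relationsOn v (T.erase j), c = 0) {c : ι → A}
    (hc : c ∈ M.relationsOn v T) (hcj : c j ∈ S.invariants) (i : ι) : c i ∈ S.invariants := by
  intro d
  rw [mem_relationsOn] at hc
  have hdc : (fun i ↦ S.act d (c i)) - H.counit d • c ∈ M.relationsOn v (T.erase j) := by
    refine M.mem_relationsOn.2 ⟨Submodule.sub_mem _ (M.act_mem_relations hv hc.1 d)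
      (Submodule.smul_mem _ _ hc.1), fun i hi ↦ ?_⟩
    rcases eq_or_ne i j with rfl | hij
    · simpa [sub_eq_zero] using hcj d
    · simp [hc.2 i (by simpa [hij] using hi)]
  simpa [sub_eq_zero] using congrFun (hmin _ hdc) i

theorem eq_zero_of_mem_relationsOn [DecidableEq ι] [NeZero (2 : R)] (hg : g.SuperComm)
    (hs : S.IsSimple) {v : ι → V} (hv : ∀ i, v i ∈ M.invariantsV)
    (hinv : ∀ c ∈ M.relations v, (∀ i, c i ∈ S.invariants) → c = 0) (T : Finset ι) :
    ∀ c ∈ M.relationsOn v T, c = 0 := by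
  induction T using Finset.strongInduction with
  | H T ih =>
  intro c hc
  by_contra hne
  obtain ⟨j, hj⟩ := Function.ne_iff.1 hne
  have hjT : j ∈ T := by_contra fun h ↦ hj ((M.mem_relationsOn.1 hc).2 j h)
  have hJ0 : (M.relationsOn v T).map (LinearMap.proj j) ≠ ⊥ :=
    fun h ↦ hj ((Submodule.mem_bot R).1 (h ▸ ⟨c, hc, rfl⟩))
  obtain ⟨_, ⟨c', hc', rfl⟩, hc'j, hc'j_inv⟩ :=
    (M.isStableLeftIdeal_map_proj_relationsOn hv T j).exists_ne_zero_mem_invariants hg hs hJ0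
  have hc'_inv :=
    M.mem_invariants_of_mem_relationsOn hv (ih _ (Finset.erase_ssubset hjT)) hc' hc'j_inv
  exact hc'j (congrFun (hinv c' (M.mem_relationsOn.1 hc').1 hc'_inv) j)

end SuperModule

theorem stmt6 {R D A V : Type u} [Field R] [CharZero R] [Ring D] [Algebra R D]
    [Ring A] [Algebra R A] [AddCommGroup V] [Module R V]
    (H : SuperHopf R D) (g : SuperRing R A) (hg : g.SuperComm)
    (S : SuperAction R D A H g) (hs : S.IsSimple)
    (M : SuperModule R D A V H g S) :
    ∀ (n : ℕ) (v : Fin n → V), (∀ i, v i ∈ M.invariantsV) →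
      (∀ c : Fin n → A, (∀ i, c i ∈ S.invariants) →
        (∑ i, M.smulA (c i) (v i)) = 0 → ∀ i, c i = 0) →
      (∀ c : Fin n → A, (∑ i, M.smulA (c i) (v i)) = 0 → ∀ i, c i = 0) := by
  intro n v hv hLI c hc
  have hinv : ∀ c ∈ M.relations v, (∀ i, c i ∈ S.invariants) → c = 0 :=
    fun c hc hc_inv ↦ funext (hLI c hc_inv (M.mem_relations.1 hc))
  exact congrFun <| M.eq_zero_of_mem_relationsOn hg hs hv hinv Finset.univ c
    (M.mem_relationsOn.2 ⟨M.mem_relations.2 hc, by simp⟩)
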